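/- arXiv:2401.01103 — 4 statements merged into one kernel-verified Lean document; each statement's English description precedes it below -/
import Mathlib

section
/- For every finite tree T on n ≥ 3 vertices there exist a vertex z of T and two subtrees T₁, T₂ of T (connected subgraphs of T) such that E(T₁) and E(T₂) are disjoint, E(T₁) ∪ E(T₂) = E(T), V(T₁) ∩ V(T₂) = {z}, and ⌈n/3⌉ ≤ |V(T₁)| ≤ ⌈2n/3⌉ and ⌈n/3⌉ ≤ |V(T₂)| ≤ ⌈2n/3⌉. -/
/-!
Take a centroid `z` of `T`: a vertex all of whose branches (components of `T - z`) have at most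
`n / 2` vertices. It exists because if the branch at `z` through a neighbour `y` has more than
`n / 2` vertices, then every branch at `y` is strictly smaller than it. The branch sizes are
positive integers summing to `n - 1`, each at most `n / 2`; either one of them is at least
`⌊n/3⌋` and is taken alone, or all are smaller and adding them one at a time the running sum
first reaches `⌊n/3⌋` while still below `2⌊n/3⌋`.
Grouping the chosen branches with `z`, and the remaining ones with `z`, gives the two subtrees.
-/

theorem Finset.exists_subset_sum_between {ι : Type*} (s : Finset ι) (w : ι → ℕ) {a k : ℕ}
    (hw : ∀ i ∈ s, w i ≤ k) (ha : a ≤ ∑ i ∈ s, w i) :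
    ∃ t ⊆ s, a ≤ ∑ i ∈ t, w i ∧ ∑ i ∈ t, w i ≤ a + k := by
  classical
  induction s using Finset.induction_on with
  | empty => exact ⟨∅, subset_rfl, by simpa using ha, by simp⟩
  | insert i s hi ih =>
    rw [sum_insert hi] at ha
    by_cases hs : a ≤ ∑ j ∈ s, w j
    · obtain ⟨t, hts, ht⟩ := ih (fun j hj => hw j (mem_insert_of_mem hj)) hs
      exact ⟨t, hts.trans (subset_insert i s), ht⟩
    · refine ⟨insert i s, subset_rfl, ?_⟩
      have := hw i (mem_insert_self i s)
      rw [sum_insert hi]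
      omega

theorem exists_balanced_split {κ : Type*} [Fintype κ] [DecidableEq κ] {w : κ → ℕ} {n : ℕ}
    (hn : 3 ≤ n) (hsum : ∑ c, w c + 1 = n) (hw : ∀ c, 2 * w c ≤ n) :
    ∃ S : Finset κ,
      (n + 2) / 3 ≤ ∑ c ∈ S, w c + 1 ∧ ∑ c ∈ S, w c + 1 ≤ (2 * n + 2) / 3 ∧
      (n + 2) / 3 ≤ ∑ c ∈ Sᶜ, w c + 1 ∧ ∑ c ∈ Sᶜ, w c + 1 ≤ (2 * n + 2) / 3 := by
  obtain ⟨S, hlo, hhi⟩ : ∃ S : Finset κ, n / 3 ≤ ∑ c ∈ S, w c ∧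
      (2 * ∑ c ∈ S, w c ≤ n ∨ ∑ c ∈ S, w c + 1 ≤ 2 * (n / 3)) := by
    by_cases hsmall : ∀ c, w c < n / 3
    · obtain ⟨S, -, hS⟩ :=
        Finset.univ.exists_subset_sum_between w (a := n / 3) (k := n / 3 - 1)
        (fun c _ => by have := hsmall c; omega) (by omega)
      exact ⟨S, hS.1, Or.inr (by omega)⟩
    · obtain ⟨c, hc⟩ := not_forall.mp hsmall
      exact ⟨{c}, by simpa using le_of_not_gt hc, by simpa using Or.inl (hw c)⟩
  have := Finset.sum_add_sum_compl S w
  exact ⟨S, by omega, by omega, by omega, by omega⟩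

namespace SimpleGraph

variable {V : Type*} {G : SimpleGraph V} {u v y z : V}

theorem Reachable.exists_walk_avoiding (h : G.Reachable v z) (hyz : y ≠ z) :
    (∃ p : G.Walk v z, y ∉ p.support) ∨ ∃ p : G.Walk v y, z ∉ p.support := by
  classical
  obtain ⟨p⟩ := h
  by_cases hy : y ∈ p.support
  · by_cases hz : z ∈ (p.takeUntil y hy).support
    · exact .inl ⟨_, Walk.notMem_support_takeUntil_support_takeUntil_subset hyz.symm hy hz⟩
    · exact .inr ⟨_, hz⟩
  · exact .inl ⟨p, hy⟩

theorem IsAcyclic.mem_support_of_adj (hG : G.IsAcyclic) (hyz : G.Adj y z) (p : G.Walk v z)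
    (hp : y ∉ p.support) (q : G.Walk v y) : z ∈ q.support := by
  by_contra hq
  have hbridge := isBridge_iff_forall_walk_mem_edges.mp
    (isAcyclic_iff_forall_adj_isBridge.mp hG hyz) (q.reverse.append p)
  rw [Walk.edges_append, Walk.edges_reverse, List.mem_append, List.mem_reverse] at hbridge
  rcases hbridge with h | h
  · exact hq (q.snd_mem_support_of_mem_edges h)
  · exact hp (p.fst_mem_support_of_mem_edges h)

namespace ComponentCompl

variable {K : Set V} {C : G.ComponentCompl K}

theorem mem_of_walk (p : G.Walk u v) (hp : ∀ x ∈ p.support, x ∉ K) (hv : v ∈ C) :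
    u ∈ C := by
  induction p with
  | nil => exact hv
  | cons h q ih =>
    exact mem_of_adj _ _ (ih (fun x hx => hp x (List.mem_cons_of_mem _ hx)) hv)
      (hp _ List.mem_cons_self) h.symm

theorem exists_walk (hu : u ∈ C) (hv : v ∈ C) :
    ∃ p : G.Walk u v, ∀ x ∈ p.support, x ∉ K := by
  obtain ⟨hu', rfl⟩ := hu
  obtain ⟨hv', hvC⟩ := hv
  obtain ⟨p⟩ := ConnectedComponent.exact hvC.symm
  have hK : ∀ x ∈ (p.map (Embedding.induce Kᶜ).toHom).support, x ∉ K := by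
    simp only [Walk.support_map, List.mem_map]
    rintro _ ⟨x, -, rfl⟩
    exact x.2
  exact ⟨_, hK⟩

end ComponentCompl

theorem IsTree.ncard_componentCompl_lt [Finite V] (hT : G.IsTree) (hyz : G.Adj y z)
    {C : G.ComponentCompl {z}} (hy : y ∈ C) (hC : Nat.card V < 2 * (C : Set V).ncard)
    (D : G.ComponentCompl {y}) : (D : Set V).ncard < (C : Set V).ncard := by
  -- The branch at `y` containing `z` is disjoint from `C`; every other one lies in `C \ {y}`.
  by_cases hzD : z ∈ D
  · have hdisj : Disjoint (D : Set V) C := Set.disjoint_left.mpr fun v hvD hvC => by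
      obtain ⟨p, hp⟩ := ComponentCompl.exists_walk hvD hzD
      obtain ⟨q, hq⟩ := ComponentCompl.exists_walk hvC hy
      exact hq z (hT.isAcyclic.mem_support_of_adj hyz p (fun h => hp y h rfl) q) rfl
    have := Set.ncard_union_eq hdisj
    have := Set.ncard_le_card (D ∪ C : Set V)
    omega
  · refine Set.ncard_lt_ncard ⟨fun v hvD => ?_, fun hCD => D.notMem_of_mem (hCD hy) rfl⟩
    rcases (hT.connected.preconnected v z).exists_walk_avoiding hyz.ne with
      ⟨p, hp⟩ | ⟨p, hp⟩
    · exact absurd (ComponentCompl.mem_of_walk p.reverse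
        (fun x hx (hxy : x = y) => hp (by rwa [Walk.support_reverse, List.mem_reverse, hxy] at hx))
        hvD) hzD
    · exact ComponentCompl.mem_of_walk p (fun x hx (hxy : x = z) => hp (hxy ▸ hx)) hy

theorem IsTree.exists_centroid [Finite V] (hT : G.IsTree) :
    ∃ z, ∀ C : G.ComponentCompl {z}, 2 * (C : Set V).ncard ≤ Nat.card V := by
  classical
  by_contra! h
  have hex : ∃ k, ∃ z, ∃ C : G.ComponentCompl {z},
      (C : Set V).ncard = k ∧ Nat.card V < 2 * k := by
    obtain ⟨z⟩ := hT.connected.nonempty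
    obtain ⟨C, hC⟩ := h z
    exact ⟨_, z, C, rfl, hC⟩
  obtain ⟨z, C, hCk, hC⟩ := Nat.find_spec hex
  obtain ⟨⟨y, z'⟩, hy, rfl, hyz⟩ :=
    C.exists_adj_boundary_pair hT.connected.preconnected (Set.singleton_nonempty z)
  obtain ⟨D, hD⟩ := h y
  exact Nat.find_min hex (hCk ▸ hT.ncard_componentCompl_lt hyz hy (hCk ▸ hC) D)
    ⟨y, D, rfl, hD⟩


theorem Preconnected.connected_induce_of_forall_adj_mem (hG : G.Preconnected) {A : Set V}
    (hz : z ∈ A) (hA : ∀ u v, u ∈ A → u ≠ z → v ≠ z → G.Adj u v → v ∈ A) :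
    (G.induce A).Connected := by
  have reach : ∀ {u w : V} (p : G.Walk u w), w = z → ∀ hu : u ∈ A,
      (G.induce A).Reachable ⟨u, hu⟩ ⟨z, hz⟩ := by
    intro u w p
    induction p with
    | nil => rintro rfl _; rfl
    | @cons u x w h q ih =>
      rintro rfl hu
      by_cases huw : u = w
      · subst huw; rfl
      by_cases hxw : x = w
      · subst hxw; exact Adj.reachable (induce_adj.mpr h)
      have hx := hA u x hu huw hxw h
      exact (Adj.reachable (induce_adj.mpr h : (G.induce A).Adj ⟨u, hu⟩ ⟨x, hx⟩)).trans
        (ih rfl hx)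
  rw [connected_iff_exists_forall_reachable]
  exact ⟨⟨z, hz⟩, fun ⟨u, hu⟩ => (reach (hG u z).some rfl hu).symm⟩

theorem Subgraph.disjoint_edgeSet_induce_top {A B : Set V} (h : (A ∩ B).Subsingleton) :
    Disjoint ((⊤ : G.Subgraph).induce A).edgeSet ((⊤ : G.Subgraph).induce B).edgeSet := by
  refine Set.disjoint_left.mpr fun e heA heB => ?_
  induction e using Sym2.ind with
  | _ u v =>
    obtain ⟨huA, hvA, huv⟩ := heA
    obtain ⟨huB, hvB, -⟩ := heB
    exact huv.ne (h ⟨huA, huB⟩ ⟨hvA, hvB⟩)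

theorem Subgraph.edgeSet_induce_top_union {A B : Set V}
    (h : ∀ u v, G.Adj u v → u ∈ A ∧ v ∈ A ∨ u ∈ B ∧ v ∈ B) :
    ((⊤ : G.Subgraph).induce A).edgeSet ∪ ((⊤ : G.Subgraph).induce B).edgeSet =
      G.edgeSet := by
  ext e
  induction e using Sym2.ind with
  | _ u v =>
    simp only [Set.mem_union, Subgraph.mem_edgeSet, Subgraph.induce_adj, Subgraph.top_adj,
      mem_edgeSet]
    constructor
    · rintro (⟨-, -, huv⟩ | ⟨-, -, huv⟩) <;> exact huv
    · intro huv
      rcases h u v huv with ⟨hu, hv⟩ | ⟨hu, hv⟩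
      exacts [.inl ⟨hu, hv, huv⟩, .inr ⟨hu, hv, huv⟩]

variable (G) in
def insertComponents (z : V) (S : Set (G.ComponentCompl {z})) : Set V :=
  insert z (⋃ C ∈ S, (C : Set V))

variable {S : Set (G.ComponentCompl {z})}

theorem mem_insertComponents : v ∈ G.insertComponents z S ↔ v = z ∨ ∃ C ∈ S, v ∈ C := by
  simp [insertComponents]

theorem connected_induce_insertComponents (hG : G.Preconnected) (S : Set (G.ComponentCompl {z})) :
    ((⊤ : G.Subgraph).induce (G.insertComponents z S)).Connected := by
  rw [← connected_induce_iff]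
  refine hG.connected_induce_of_forall_adj_mem (Set.mem_insert z _) fun u v hu huz hvz huv => ?_
  obtain ⟨C, hCS, huC⟩ := (mem_insertComponents.mp hu).resolve_left huz
  exact mem_insertComponents.mpr (.inr ⟨C, hCS, C.mem_of_adj u v huC hvz huv⟩)

theorem insertComponents_inter_compl :
    G.insertComponents z S ∩ G.insertComponents z Sᶜ = {z} := by
  refine Set.eq_singleton_iff_unique_mem.mpr ⟨⟨Set.mem_insert z _, Set.mem_insert z _⟩, ?_⟩
  rintro v ⟨hv, hv'⟩
  rcases mem_insertComponents.mp hv with rfl | ⟨C, hCS, hvC⟩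
  · rfl
  rcases mem_insertComponents.mp hv' with rfl | ⟨D, hDS, hvD⟩
  · rfl
  obtain rfl : C = D := by
    by_contra hCD
    exact Set.disjoint_left.mp (ComponentCompl.pairwise_disjoint hCD) hvC hvD
  exact absurd hCS hDS

theorem adj_mem_insertComponents_or_compl (huv : G.Adj u v) :
    u ∈ G.insertComponents z S ∧ v ∈ G.insertComponents z S ∨
      u ∈ G.insertComponents z Sᶜ ∧ v ∈ G.insertComponents z Sᶜ := by
  obtain ⟨C, hu, hv⟩ :
      ∃ C : G.ComponentCompl {z}, (u = z ∨ u ∈ C) ∧ (v = z ∨ v ∈ C) := by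
    by_cases huz : u = z
    · exact ⟨G.componentComplMk (K := {z}) (v := v) (by simpa [huz] using huv.ne'),
        .inl huz, .inr (G.componentComplMk_mem _)⟩
    · refine ⟨G.componentComplMk (K := {z}) huz, .inr (G.componentComplMk_mem _), ?_⟩
      by_cases hvz : v = z
      · exact .inl hvz
      · exact .inr (ComponentCompl.mem_of_adj u v (G.componentComplMk_mem _) hvz huv)
  have mem_both : ∀ S' : Set (G.ComponentCompl {z}), C ∈ S' →
      u ∈ G.insertComponents z S' ∧ v ∈ G.insertComponents z S' := fun S' hCS' =>
    ⟨mem_insertComponents.mpr (hu.imp_right (⟨C, hCS', ·⟩)),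
      mem_insertComponents.mpr (hv.imp_right (⟨C, hCS', ·⟩))⟩
  exact (em (C ∈ S)).imp (mem_both S) (mem_both Sᶜ)

theorem ncard_insertComponents [Finite V] (S : Finset (G.ComponentCompl {z})) :
    (G.insertComponents z S).ncard = ∑ C ∈ S, (C : Set V).ncard + 1 := by
  rw [insertComponents, Set.ncard_insert_of_notMem, Set.Finite.ncard_biUnion S.finite_toSet
    (fun _ _ => Set.toFinite _) (ComponentCompl.pairwise_disjoint.set_pairwise _),
    finsum_mem_coe_finset]
  simp only [Set.mem_iUnion, not_exists]
  exact fun C _ hzC => C.notMem_of_mem hzC rfl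

theorem insertComponents_univ : G.insertComponents z Set.univ = Set.univ := by
  refine Set.eq_univ_of_forall fun v => mem_insertComponents.mpr ?_
  by_cases hvz : v = z
  · exact .inl hvz
  · exact .inr ⟨G.componentComplMk (K := {z}) hvz, trivial, G.componentComplMk_mem _⟩

end SimpleGraph

open SimpleGraph in
/-- **Centroid bipartition.** For every finite tree `T` on `n ≥ 3` vertices there exist a
vertex `z` and two subtrees `T₁`, `T₂` of `T` (connected subgraphs of `T`) such that
`E(T₁)` and `E(T₂)` are disjoint, `E(T₁) ∪ E(T₂) = E(T)`, `V(T₁) ∩ V(T₂) = {z}`, and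
`⌈n/3⌉ ≤ |V(T₁)| ≤ ⌈2n/3⌉`, `⌈n/3⌉ ≤ |V(T₂)| ≤ ⌈2n/3⌉`.
(Here `⌈n/3⌉ = (n+2)/3` and `⌈2n/3⌉ = (2n+2)/3` in natural-number division.) -/
theorem tree_centroid_bipartition {V : Type*} [Fintype V]
    (T : SimpleGraph V) (hT : T.IsTree) (hn : 3 ≤ Fintype.card V) :
    ∃ (z : V) (T1 T2 : T.Subgraph), T1.Connected ∧ T2.Connected ∧
      Disjoint T1.edgeSet T2.edgeSet ∧
      T1.edgeSet ∪ T2.edgeSet = T.edgeSet ∧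
      T1.verts ∩ T2.verts = {z} ∧
      (Fintype.card V + 2) / 3 ≤ T1.verts.ncard ∧
      T1.verts.ncard ≤ (2 * Fintype.card V + 2) / 3 ∧
      (Fintype.card V + 2) / 3 ≤ T2.verts.ncard ∧
      T2.verts.ncard ≤ (2 * Fintype.card V + 2) / 3 := by
  classical
  obtain ⟨z, hz⟩ := hT.exists_centroid
  have hsum : ∑ C : T.ComponentCompl {z}, (C : Set V).ncard + 1 = Fintype.card V := by
    rw [← ncard_insertComponents, Finset.coe_univ, insertComponents_univ, Set.ncard_univ,
      Nat.card_eq_fintype_card]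
  obtain ⟨S, hS⟩ := exists_balanced_split hn hsum (Nat.card_eq_fintype_card (α := V) ▸ hz)
  have hinter := insertComponents_inter_compl (G := T) (z := z) (S := S)
  rw [← Finset.coe_compl] at hinter
  refine ⟨z, (⊤ : T.Subgraph).induce (T.insertComponents z S),
    (⊤ : T.Subgraph).induce (T.insertComponents z ↑Sᶜ), ?_, ?_,
    Subgraph.disjoint_edgeSet_induce_top (hinter.symm ▸ Set.subsingleton_singleton),
    Subgraph.edgeSet_induce_top_union fun u v huv => ?_, hinter, ?_⟩
  · exact connected_induce_insertComponents hT.connected.preconnected _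
  · exact connected_induce_insertComponents hT.connected.preconnected _
  · simpa only [Finset.coe_compl] using adj_mem_insertComponents_or_compl huv
  · simpa only [Subgraph.induce_verts, ncard_insertComponents] using hS
end

section
/- Fix L ∈ ℕ, p = 2^L, and a real ε₂ > 0. Let M(i,j) ∈ [0,∞] be given for all 0 ≤ i ≤ L and 0 ≤ j < 2^i, satisfying the dyadic consistency M(i,j) = min(M(i+1, 2j), M(i+1, 2j+1)) for all 0 ≤ i < L and 0 ≤ j < 2^i. Let Φ(i,j) be the predicate: j = 0, or (1+ε₂)·M(i,j) < min_{0 ≤ j' < j} M(i,j'). Suppose r(i,j) ∈ [0,∞] (defined for 0 ≤ i ≤ L, 0 ≤ j < 2^i) satisfies: (1) for every i and every j with 1 ≤ j < 2^i, min_{0 ≤ j' ≤ j} M(i,j') ≤ r(i,j) ≤ r(i,j−1); and (2) whenever Φ(i,j) holds, r(i,j) = M(i,j). For 1 ≤ f ≤ p−1 let j(i,f) = ⌊f·2^i/p⌋, let r'(f) be the minimum of r(i, j(i,f)−1) over all 0 ≤ i ≤ L with j(i,f) ≥ 1, and let m(f) = min_{0 ≤ j < f} M(L,j). Then m(f) ≤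 r'(f) ≤ (1+ε₂)^L · m(f) for every 1 ≤ f ≤ p−1. -/
/-!
Write `j(i) = ⌊f 2^i / 2^L⌋` and `P i = min_{j < j(i)} M(i, j)`. Dyadic consistency makes the
minimum of the first `2 j(i)` entries of level `i + 1` equal to `P i`, and `j(i + 1)` is `2 j(i)`
or `2 j(i) + 1`, so `P` decreases from `P 0 = ∞` to `P L = m(f)`; with conditions (1) and (2) this gives
`m(f) ≤ r'(f)`. From level `i` to level `i + 1`, either `P` drops by at most a factor `1 + ε₂`, or
the one new entry satisfies `Φ`, where condition (2) makes `r` exact and so `r'(f) ≤ P (i + 1)`.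
Hence `r'(f) ≤ (1 + ε₂)^i P i` by induction on `i`, and `i = L` is the claim.
-/

open scoped ENNReal

open Finset

theorem Nat.two_mul_div_eq_or {m : ℕ} (hm : 0 < m) (x : ℕ) :
    2 * x / m = 2 * (x / m) ∨ 2 * x / m = 2 * (x / m) + 1 := by
  have h : 2 * x / m = 2 * (x % m) / m + 2 * (x / m) := by
    conv_lhs => rw [← Nat.mod_add_div x m, mul_add, mul_left_comm, Nat.add_mul_div_left _ _ hm]
  have hq : 2 * (x % m) / m < 2 := Nat.div_lt_of_lt_mul (by have := Nat.mod_lt x hm; omega)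
  rw [h]
  generalize 2 * (x % m) / m = q at hq
  omega

theorem Finset.inf_range_two_mul {α : Type*} [SemilatticeInf α] [OrderTop α] {a b : ℕ → α}
    {j : ℕ} (h : ∀ k < j, a k = b (2 * k) ⊓ b (2 * k + 1)) :
    (range (2 * j)).inf b = (range j).inf a := by
  induction j with
  | zero => simp
  | succ j ih =>
    rw [show 2 * (j + 1) = 2 * j + 1 + 1 by ring, range_add_one, inf_insert, range_add_one,
      inf_insert, ih fun k hk => h k (by omega), range_add_one, inf_insert, h j (by omega),
      inf_left_comm, inf_assoc]

/-- The predicate `Φ` of the paper, with `c = 1 + ε₂`. -/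
def IsRecord (c : ℝ≥0∞) (a : ℕ → ℝ≥0∞) (j : ℕ) : Prop :=
  j = 0 ∨ c * a j < (range j).inf a

section Record

variable {c : ℝ≥0∞} {a : ℕ → ℝ≥0∞} {j : ℕ}

theorem IsRecord.inf_range_succ (hc : 1 ≤ c) (h : IsRecord c a j) :
    (range (j + 1)).inf a = a j := by
  rw [range_add_one, inf_insert, inf_eq_left]
  rcases h with rfl | h
  · simp
  · exact (le_mul_of_one_le_left' hc).trans h.le

theorem inf_range_le_mul_inf_range_succ (hc : 1 ≤ c) (h : ¬IsRecord c a j) :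
    (range j).inf a ≤ c * (range (j + 1)).inf a := by
  have hj : (range j).inf a ≤ c * a j := not_lt.1 fun h' => h (Or.inr h')
  rw [range_add_one, inf_insert, mul_min]
  exact le_min hj (le_mul_of_one_le_left' hc)

end Record

def DyadicallyConsistent (L : ℕ) (M : ℕ → ℕ → ℝ≥0∞) : Prop :=
  ∀ i < L, ∀ j < 2 ^ i, M i j = min (M (i + 1) (2 * j)) (M (i + 1) (2 * j + 1))

theorem DyadicallyConsistent.inf_range_two_mul {L i j : ℕ} {M : ℕ → ℕ → ℝ≥0∞}
    (hM : DyadicallyConsistent L M) (hi : i < L) (hj : j ≤ 2 ^ i) :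
    (range (2 * j)).inf (M (i + 1)) = (range j).inf (M i) :=
  Finset.inf_range_two_mul fun k hk => hM i hi k (by omega)

/-- `j(i, f)` of the paper, with `p = 2 ^ L`. -/
def dyadicIndex (L f i : ℕ) : ℕ := f * 2 ^ i / 2 ^ L

section DyadicIndex

variable {L f : ℕ}

theorem dyadicIndex_lt (hf : f < 2 ^ L) (i : ℕ) : dyadicIndex L f i < 2 ^ i :=
  (Nat.div_lt_iff_lt_mul (Nat.two_pow_pos L)).2 <| by
    rw [mul_comm (2 ^ i)]; exact Nat.mul_lt_mul_of_pos_right hf (Nat.two_pow_pos i)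

theorem dyadicIndex_self : dyadicIndex L f L = f :=
  Nat.mul_div_cancel f (Nat.two_pow_pos L)

theorem dyadicIndex_succ (L f i : ℕ) :
    dyadicIndex L f (i + 1) = 2 * dyadicIndex L f i ∨
      dyadicIndex L f (i + 1) = 2 * dyadicIndex L f i + 1 := by
  rw [dyadicIndex, dyadicIndex, pow_succ, ← mul_assoc, mul_comm _ 2]
  exact Nat.two_mul_div_eq_or (Nat.two_pow_pos L) _

end DyadicIndex

/-- `r'(f)` of the paper. -/
noncomputable def minOverLevels (r : ℕ → ℕ → ℝ≥0∞) (L f : ℕ) : ℝ≥0∞ :=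
  ((range (L + 1)).filter (fun i => 1 ≤ dyadicIndex L f i)).inf
    (fun i => r i (dyadicIndex L f i - 1))

section Levels

variable {L f i : ℕ} {M r : ℕ → ℕ → ℝ≥0∞} {c : ℝ≥0∞}

theorem inf_range_dyadicIndex_succ_le (hM : DyadicallyConsistent L M) (hf : f < 2 ^ L)
    (hi : i < L) :
    (range (dyadicIndex L f (i + 1))).inf (M (i + 1)) ≤ (range (dyadicIndex L f i)).inf (M i) := by
  rw [← hM.inf_range_two_mul hi (dyadicIndex_lt hf i).le]
  exact inf_mono (range_subset_range.2 (by rcases dyadicIndex_succ L f i with h | h <;> omega))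

theorem inf_range_le_inf_range_dyadicIndex (hM : DyadicallyConsistent L M) (hf : f < 2 ^ L)
    (hi : i ≤ L) : (range f).inf (M L) ≤ (range (dyadicIndex L f i)).inf (M i) := by
  induction hi using Nat.decreasingInduction with
  | self => rw [dyadicIndex_self]
  | of_succ k hk ih => exact ih.trans (inf_range_dyadicIndex_succ_le hM hf hk)

theorem inf_range_succ_le
    (hr1 : ∀ i ≤ L, ∀ j, 1 ≤ j → j < 2 ^ i → (range (j + 1)).inf (M i) ≤ r i j)
    (hr2 : ∀ i ≤ L, ∀ j < 2 ^ i, IsRecord c (M i) j → r i j = M i j)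
    {j : ℕ} (hi : i ≤ L) (hj : j < 2 ^ i) : (range (j + 1)).inf (M i) ≤ r i j := by
  rcases j.eq_zero_or_pos with rfl | hj0
  · simp [hr2 i hi 0 hj (Or.inl rfl)]
  · exact hr1 i hi j hj0 hj

theorem inf_range_le_minOverLevels (hM : DyadicallyConsistent L M)
    (hr1 : ∀ i ≤ L, ∀ j, 1 ≤ j → j < 2 ^ i → (range (j + 1)).inf (M i) ≤ r i j)
    (hr2 : ∀ i ≤ L, ∀ j < 2 ^ i, IsRecord c (M i) j → r i j = M i j) (hf : f < 2 ^ L) :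
    (range f).inf (M L) ≤ minOverLevels r L f := by
  refine Finset.le_inf fun i hi => ?_
  obtain ⟨hiL, hg⟩ := mem_filter.1 hi
  have hiL : i ≤ L := Nat.lt_succ_iff.1 (mem_range.1 hiL)
  calc (range f).inf (M L) ≤ (range (dyadicIndex L f i)).inf (M i) :=
        inf_range_le_inf_range_dyadicIndex hM hf hiL
    _ = (range (dyadicIndex L f i - 1 + 1)).inf (M i) := by rw [Nat.sub_add_cancel hg]
    _ ≤ r i (dyadicIndex L f i - 1) :=
        inf_range_succ_le hr1 hr2 hiL (by have := dyadicIndex_lt hf i; omega)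

theorem inf_range_dyadicIndex_le_mul_or (hc : 1 ≤ c) (hM : DyadicallyConsistent L M)
    (hr2 : ∀ i ≤ L, ∀ j < 2 ^ i, IsRecord c (M i) j → r i j = M i j) (hf : f < 2 ^ L)
    (hi : i < L) :
    (range (dyadicIndex L f i)).inf (M i) ≤
        c * (range (dyadicIndex L f (i + 1))).inf (M (i + 1)) ∨
      1 ≤ dyadicIndex L f (i + 1) ∧
        r (i + 1) (dyadicIndex L f (i + 1) - 1) ≤
          (range (dyadicIndex L f (i + 1))).inf (M (i + 1)) := by
  set b := 2 * dyadicIndex L f i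
  have hb : (range b).inf (M (i + 1)) = (range (dyadicIndex L f i)).inf (M i) :=
    hM.inf_range_two_mul hi (dyadicIndex_lt hf i).le
  have hlt := dyadicIndex_lt hf (i + 1)
  rcases dyadicIndex_succ L f i with h | h
  · left
    rw [h, hb]
    exact le_mul_of_one_le_left' hc
  · rw [h] at hlt ⊢
    by_cases hrec : IsRecord c (M (i + 1)) b
    · right
      refine ⟨by omega, ?_⟩
      rw [Nat.add_sub_cancel, hr2 (i + 1) hi b (by omega) hrec, hrec.inf_range_succ hc]
    · left
      rw [← hb]
      exact inf_range_le_mul_inf_range_succ hc hrec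

theorem minOverLevels_le_pow_mul (hc : 1 ≤ c) (hM : DyadicallyConsistent L M)
    (hr2 : ∀ i ≤ L, ∀ j < 2 ^ i, IsRecord c (M i) j → r i j = M i j) (hf : f < 2 ^ L)
    (hi : i ≤ L) :
    minOverLevels r L f ≤ c ^ i * (range (dyadicIndex L f i)).inf (M i) := by
  induction i with
  | zero => simp [Nat.lt_one_iff.1 (dyadicIndex_lt hf 0)]
  | succ i ih =>
    rcases inf_range_dyadicIndex_le_mul_or hc hM hr2 hf hi with h | ⟨hg, hr⟩
    · calc minOverLevels r L f ≤ c ^ i * (range (dyadicIndex L f i)).inf (M i) := ih (by omega)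
        _ ≤ c ^ i * (c * (range (dyadicIndex L f (i + 1))).inf (M (i + 1))) := by gcongr
        _ = _ := by ring
    · calc minOverLevels r L f ≤ r (i + 1) (dyadicIndex L f (i + 1) - 1) :=
            inf_le (mem_filter.2 ⟨mem_range.2 (by omega), hg⟩)
        _ ≤ _ := hr.trans (le_mul_of_one_le_left' (one_le_pow₀ hc))

end Levels

/-- **Abstract correctness of the progressive-Dijkstra data (Lemma on the DP-oracle).**
Fix `L`, `p = 2^L`, `ε₂ > 0`.  `M i j ∈ [0,∞]` (for `i ≤ L`, `j < 2^i`) satisfies the dyadic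
consistency `M i j = min (M (i+1) (2j)) (M (i+1) (2j+1))`.  `Φ i j` is the predicate
`j = 0 ∨ (1+ε₂)·M i j < min_{j' < j} M i j'`.  Suppose `r i j` satisfies:
(1) `min_{j' ≤ j} M i j' ≤ r i j ≤ r i (j−1)` for `1 ≤ j < 2^i`;
(2) if `Φ i j` holds then `r i j = M i j`.
For `1 ≤ f ≤ p − 1` let `j(i,f) = ⌊f·2^i/p⌋`, let `r' f` be the minimum of
`r i (j(i,f) − 1)` over all `i ≤ L` with `j(i,f) ≥ 1`, and `m f = min_{j < f} M L j`.
Then `m f ≤ r' f ≤ (1+ε₂)^L · m f`. -/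
theorem progressive_dijkstra_approx (L : ℕ) (ε₂ : ℝ) (hε : 0 < ε₂)
    (M r : ℕ → ℕ → ℝ≥0∞)
    (hM : ∀ i < L, ∀ j < 2 ^ i,
      M i j = min (M (i + 1) (2 * j)) (M (i + 1) (2 * j + 1)))
    (hr1 : ∀ i ≤ L, ∀ j, 1 ≤ j → j < 2 ^ i →
      (Finset.range (j + 1)).inf (M i) ≤ r i j ∧ r i j ≤ r i (j - 1))
    (hr2 : ∀ i ≤ L, ∀ j < 2 ^ i,
      (j = 0 ∨ ENNReal.ofReal (1 + ε₂) * M i j < (Finset.range j).inf (M i)) →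
      r i j = M i j) :
    ∀ f, 1 ≤ f → f ≤ 2 ^ L - 1 →
      (Finset.range f).inf (M L) ≤
        ((Finset.range (L + 1)).filter
            (fun i => 1 ≤ f * 2 ^ i / 2 ^ L)).inf
          (fun i => r i (f * 2 ^ i / 2 ^ L - 1)) ∧
      ((Finset.range (L + 1)).filter
            (fun i => 1 ≤ f * 2 ^ i / 2 ^ L)).inf
          (fun i => r i (f * 2 ^ i / 2 ^ L - 1)) ≤
        ENNReal.ofReal ((1 + ε₂) ^ L) * (Finset.range f).inf (M L) := by
  intro f _ hfL
  have hf : f < 2 ^ L := by have := Nat.two_pow_pos L; omega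
  have hc : 1 ≤ ENNReal.ofReal (1 + ε₂) := by
    rw [← ENNReal.ofReal_one]; exact ENNReal.ofReal_le_ofReal (by linarith)
  have upper := minOverLevels_le_pow_mul hc hM hr2 hf le_rfl
  rw [dyadicIndex_self, ← ENNReal.ofReal_pow (by linarith)] at upper
  exact ⟨inf_range_le_minOverLevels hM (fun i hi j hj hj' => (hr1 i hi j hj hj').1) hr2 hf, upper⟩
end

section
/- For every failed vertex v_f ∈ V(P) \ {s} and every destination t ∈ V(G) \ {v_f}, it holds that dist_{G−v_f}(s,t) = min( ddist_{G−v_f}(s,t), jdist_{G−v_f}(s,t) ). -/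
open scoped ENNReal

/-- A directed graph on vertex type `V` with real edge weights. -/
structure WDigraph (V : Type) where
  Adj : V → V → Prop
  w : V → V → ℝ

namespace WDigraph

variable {V : Type}

/-- The weighted length of a walk, given as the list of its vertices:
the sum of the weights of consecutive pairs. -/
def len (G : WDigraph V) (l : List V) : ℝ :=
  ((l.zip l.tail).map fun p => G.w p.1 p.2).sum

/-- `l` is a (simple) path from `u` to `v` in `G`: a nonempty list of pairwise distinct
vertices, consecutively joined by edges of `G`, starting at `u` and ending at `v`. -/
def IsPathFrom (G : WDigraph V) (u v : V) (l : List V) : Prop :=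
  l.Chain' G.Adj ∧ l.Nodup ∧ l.head? = some u ∧ l.getLast? = some v

/-- The distance from `u` to `v` in `G`: the minimum length of a path from `u` to `v`,
equal to `∞` if no such path exists. -/
noncomputable def dist (G : WDigraph V) (u v : V) : ℝ≥0∞ :=
  ⨅ (l : List V) (_ : G.IsPathFrom u v l), ENNReal.ofReal (G.len l)

/-- `G − x`: the graph obtained from `G` by deleting the vertex `x`
and all edges incident to it. -/
def deleteVert (G : WDigraph V) (x : V) : WDigraph V where
  Adj a b := G.Adj a b ∧ a ≠ x ∧ b ≠ x
  w := G.w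

/-- `G[Ψ(U)]`: the subgraph of `G` consisting of the edges with at least one endpoint
in `U` (and their endpoints). -/
def psiSub (G : WDigraph V) (U : Set V) : WDigraph V where
  Adj a b := G.Adj a b ∧ (a ∈ U ∨ b ∈ U)
  w := G.w

/-- All edge weights of `G` are positive. -/
def PosWeights (G : WDigraph V) : Prop := ∀ a b, G.Adj a b → 0 < G.w a b

end WDigraph

/-- Every prefix of the path `P` (starting at `s`) is a shortest path in `G`. -/
def ShortestPrefixes {V : Type} (G : WDigraph V) (s : V) (P : List V) : Prop :=
  ∀ k < P.length, ENNReal.ofReal (G.len (P.take (k + 1))) = G.dist s (P.getD k s)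
/-- `R` is a *departing* `s`–`t` path avoiding the failed vertex `v_f = P[f]`:
an `s`–`t` path in `G − P[f]` such that
(C1) the vertices of `R` lying on `P[0, f−1]` form a prefix of `R`, and
(C2) no vertex of `R` other than possibly its last lies on `P[f+1, p−1]`. -/
def IsDeparting {V : Type} (G : WDigraph V) (P : List V) (f : ℕ) (s t : V)
    (R : List V) : Prop :=
  (G.deleteVert (P.getD f s)).IsPathFrom s t R ∧
  (∃ k, (∀ a ∈ R.take k, a ∈ P.take f) ∧ (∀ a ∈ R.drop k, a ∉ P.take f)) ∧
  (∀ a ∈ R.dropLast, a ∉ P.drop (f + 1))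

/-- `R` is a *jumping* `s`–`t` path avoiding the failed vertex `v_f = P[f]`:
an `s`–`t` path in `G − P[f]` satisfying (C1) and
(C3) some vertex of `R` other than its last lies on `P[f+1, p−1]`. -/
def IsJumping {V : Type} (G : WDigraph V) (P : List V) (f : ℕ) (s t : V)
    (R : List V) : Prop :=
  (G.deleteVert (P.getD f s)).IsPathFrom s t R ∧
  (∃ k, (∀ a ∈ R.take k, a ∈ P.take f) ∧ (∀ a ∈ R.drop k, a ∉ P.take f)) ∧
  (∃ a ∈ R.dropLast, a ∈ P.drop (f + 1))

/-- `ddist`: the minimum length of a departing `s`–`t` path avoiding `P[f]`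
(`∞` if none exists). -/
noncomputable def ddist {V : Type} (G : WDigraph V) (P : List V) (f : ℕ)
    (s t : V) : ℝ≥0∞ :=
  ⨅ (R : List V) (_ : IsDeparting G P f s t R), ENNReal.ofReal (G.len R)

/-- `jdist`: the minimum length of a jumping `s`–`t` path avoiding `P[f]`
(`∞` if none exists). -/
noncomputable def jdist {V : Type} (G : WDigraph V) (P : List V) (f : ℕ)
    (s t : V) : ℝ≥0∞ :=
  ⨅ (R : List V) (_ : IsJumping G P f s t R), ENNReal.ofReal (G.len R)

/-! Once a path in `G − v_f` satisfies (C1) it is departing or jumping, so it suffices to enforce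
(C1) without increasing the length. Cut the path at its last vertex `x` on `P[0, f−1]` and replace
the part before `x` by the prefix of `P` ending at `x`: that prefix is a shortest path, avoids
`v_f`, and meets the remaining tail only in `x`, since the tail avoids `P[0, f−1]`. -/

namespace List

theorem exists_split_at_last_of_exists {α : Type*} (p : α → Prop) :
    ∀ l : List α, (∃ a ∈ l, p a) → ∃ Q x B, l = Q ++ x :: B ∧ p x ∧ ∀ b ∈ B, ¬ p b
  | [], h => by simp at h
  | a :: l, h => by
    by_cases hl : ∃ b ∈ l, p b
    · obtain ⟨Q, x, B, rfl, hx, hB⟩ := exists_split_at_last_of_exists p l hl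
      exact ⟨a :: Q, x, B, rfl, hx, hB⟩
    · exact ⟨[], a, l, rfl, by simpa [hl] using h, by simpa using hl⟩

end List

namespace WDigraph

variable {V : Type} (G : WDigraph V)

@[simp]
theorem len_nil : G.len [] = 0 := rfl

@[simp]
theorem len_singleton (a : V) : G.len [a] = 0 := rfl

theorem len_cons_cons (a b : V) (l : List V) :
    G.len (a :: b :: l) = G.w a b + G.len (b :: l) := by
  simp [len]

theorem len_append_cons (A : List V) (x : V) (B : List V) :
    G.len (A ++ x :: B) = G.len (A ++ [x]) + G.len (x :: B) := by
  induction A with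
  | nil => simp
  | cons a A ih =>
    cases A with
    | nil => simp [len_cons_cons]
    | cons b A =>
      simp only [List.cons_append, len_cons_cons] at ih ⊢
      rw [ih, add_assoc]

theorem len_nonneg {G : WDigraph V} (hw : G.PosWeights) :
    ∀ {l : List V}, l.IsChain G.Adj → 0 ≤ G.len l
  | [], _ | [_], _ => by simp
  | a :: b :: l, h => by
    rw [List.isChain_cons_cons] at h
    rw [len_cons_cons]
    exact add_nonneg (hw a b h.1).le (len_nonneg hw h.2)

variable {G}

theorem dist_le {u v : V} {l : List V} (h : G.IsPathFrom u v l) :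
    G.dist u v ≤ ENNReal.ofReal (G.len l) :=
  iInf₂_le l h

theorem IsPathFrom.of_append_cons {u v x : V} {A B : List V}
    (h : G.IsPathFrom u v (A ++ x :: B)) :
    G.IsPathFrom u x (A ++ [x]) ∧ G.IsPathFrom x v (x :: B) := by
  obtain ⟨hc, hn, hh, hl⟩ := h
  rw [List.getLast?_append_cons] at hl
  refine ⟨⟨?_, ?_, by cases A <;> simpa using hh, by simp⟩,
    ⟨hc.right_of_append, hn.of_append_right, rfl, hl⟩⟩
  · rw [List.append_cons] at hc; exact hc.left_of_append
  · rw [List.append_cons] at hn; exact hn.of_append_left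

theorem IsPathFrom.append_cons {u v x : V} {A B : List V}
    (hA : G.IsPathFrom u x (A ++ [x])) (hB : G.IsPathFrom x v (x :: B))
    (hAB : ∀ a ∈ A, a ∉ x :: B) : G.IsPathFrom u v (A ++ x :: B) := by
  refine ⟨?_, List.nodup_append.mpr ⟨hA.2.1.of_append_left, hB.2.1, ?_⟩, ?_, ?_⟩
  · rw [List.append_cons]; exact hA.1.append_overlap hB.1 (List.cons_ne_nil _ _)
  · rintro a ha b hb rfl; exact hAB a ha hb
  · cases A <;> simpa using hA.2.2.1
  · rw [List.getLast?_append_cons]; exact hB.2.2.2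

theorem IsPathFrom.deleteVert {u v x : V} {l : List V} (h : G.IsPathFrom u v l) (hx : x ∉ l) :
    (G.deleteVert x).IsPathFrom u v l :=
  ⟨h.1.imp_of_mem_imp fun _ _ ha hb hab => ⟨hab, ne_of_mem_of_not_mem ha hx,
    ne_of_mem_of_not_mem hb hx⟩, h.2⟩

theorem IsPathFrom.of_deleteVert {u v x : V} {l : List V}
    (h : (G.deleteVert x).IsPathFrom u v l) : G.IsPathFrom u v l :=
  ⟨h.1.imp fun _ _ hab => hab.1, h.2⟩

end WDigraph

section

open WDigraph

variable {V : Type} {G : WDigraph V}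

theorem ShortestPrefixes.len_prefix_le {s x : V} {P P₁ P₂ L : List V}
    (hshort : ShortestPrefixes G s P) (hw : G.PosWeights) (hP : P = P₁ ++ x :: P₂)
    (hL : G.IsPathFrom s x L) :
    G.len (P₁ ++ [x]) ≤ G.len L := by
  have hk : P₁.length < P.length := by simp [hP]
  have htake : P.take (P₁.length + 1) = P₁ ++ [x] := by simp [hP, List.take_append]
  have hget : P.getD P₁.length s = x := by simp [hP]
  rw [← ENNReal.ofReal_le_ofReal_iff (len_nonneg hw hL.1), ← htake, hshort _ hk, hget]
  exact dist_le hL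

theorem ShortestPrefixes.exists_len_le_path_meeting_prefix_first {s z t v : V} {P S R : List V}
    (hshort : ShortestPrefixes G s P) (hw : G.PosWeights) (hP : G.IsPathFrom s z P) (hS : S <+: P)
    (hs : s ∈ S) (hv : v ∉ S) (hR : (G.deleteVert v).IsPathFrom s t R) :
    ∃ R', (G.deleteVert v).IsPathFrom s t R' ∧
      (∃ k, (∀ a ∈ R'.take k, a ∈ S) ∧ (∀ a ∈ R'.drop k, a ∉ S)) ∧ G.len R' ≤ G.len R := by
  obtain ⟨Q, x, B, rfl, hxS, hBS⟩ :=
    List.exists_split_at_last_of_exists (· ∈ S) R ⟨s, List.mem_of_mem_head? hR.2.2.1, hs⟩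
  obtain ⟨P₁, S₂, rfl⟩ := List.append_of_mem hxS
  obtain ⟨T, rfl⟩ := hS
  have hPP : (P₁ ++ x :: S₂) ++ T = P₁ ++ x :: (S₂ ++ T) := by simp
  have hPx : G.IsPathFrom s x (P₁ ++ [x]) := (hPP ▸ hP).of_append_cons.1
  have hPS : ∀ a ∈ P₁ ++ [x], a ∈ P₁ ++ x :: S₂ := by simp +contextual [or_imp]
  obtain ⟨hQx, hxB⟩ := hR.of_append_cons
  refine ⟨P₁ ++ x :: B, (hPx.deleteVert fun h => hv (hPS v h)).append_cons hxB ?_,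
    ⟨(P₁ ++ [x]).length, ?_, ?_⟩, ?_⟩
  · intro a ha haxB
    obtain rfl | haB := List.mem_cons.mp haxB
    · exact (List.nodup_append.mp hPx.2.1).2.2 a ha a (List.mem_singleton_self a) rfl
    · exact hBS a haB (hPS a (List.mem_append_left _ ha))
  · rw [List.append_cons P₁ x B, List.take_left]; exact hPS
  · rw [List.append_cons P₁ x B, List.drop_left]; exact hBS
  · rw [len_append_cons G P₁ x B, len_append_cons G Q x B]
    exact add_le_add (hshort.len_prefix_le hw hPP hQx.of_deleteVert) le_rfl

end

theorem dist_eq_min_ddist_jdist_general {V : Type} (G : WDigraph V)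
    (hw : G.PosWeights) (s : V) (P : List V)
    (hchain : P.Chain' G.Adj) (hnodup : P.Nodup) (hhead : P.head? = some s)
    (hshort : ShortestPrefixes G s P)
    (f : ℕ) (hf1 : 1 ≤ f) (hf2 : f < P.length)
    (t : V) :
    (G.deleteVert (P.getD f s)).dist s t =
      min (ddist G P f s t) (jdist G P f s t) := by
  have hP : G.IsPathFrom s (P.getLast (List.ne_nil_of_length_pos (by omega))) P :=
    ⟨hchain, hnodup, hhead, List.getLast?_eq_some_getLast _⟩
  have hs : s ∈ P.take f := by
    obtain ⟨P', rfl⟩ := List.head?_eq_some_iff.mp hhead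
    obtain ⟨g, rfl⟩ := Nat.exists_eq_add_of_le' hf1
    simp
  have hv : P.getD f s ∉ P.take f := by
    rw [← List.take_append_drop f P, List.drop_eq_getElem_cons hf2, List.nodup_append] at hnodup
    rw [List.getD_eq_getElem _ _ hf2]
    exact fun h => hnodup.2.2 _ h _ List.mem_cons_self rfl
  refine le_antisymm
    (le_min (le_iInf₂ fun R hR => iInf₂_le R hR.1) (le_iInf₂ fun R hR => iInf₂_le R hR.1))
    (le_iInf₂ fun R hR => ?_)
  obtain ⟨R', hR', hC1, hlen⟩ :=
    hshort.exists_len_le_path_meeting_prefix_first hw hP (List.take_prefix f P) hs hv hR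
  by_cases hjump : ∃ a ∈ R'.dropLast, a ∈ P.drop (f + 1)
  · exact (min_le_right _ _).trans <|
      (iInf₂_le R' ⟨hR', hC1, hjump⟩).trans (ENNReal.ofReal_le_ofReal hlen)
  · exact (min_le_left _ _).trans <|
      (iInf₂_le R' ⟨hR', hC1, by simpa using hjump⟩).trans (ENNReal.ofReal_le_ofReal hlen)

/-- **Decomposition of replacement distances.** For every failed vertex
`v_f = P[f] ∈ V(P) \ {s}` and destination `t ≠ v_f`,
`dist_{G−v_f}(s,t) = min(ddist_{G−v_f}(s,t), jdist_{G−v_f}(s,t))`.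
Here `P` is a path of `G` starting at `s` all of whose prefixes are shortest paths,
and the edge weights of `G` are positive. -/
theorem dist_eq_min_ddist_jdist {V : Type} [Fintype V] (G : WDigraph V)
    (hw : G.PosWeights) (s : V) (P : List V)
    (hchain : P.Chain' G.Adj) (hnodup : P.Nodup) (hhead : P.head? = some s)
    (hshort : ShortestPrefixes G s P)
    (f : ℕ) (hf1 : 1 ≤ f) (hf2 : f < P.length)
    (t : V) (ht : t ≠ P.getD f s) :
    (G.deleteVert (P.getD f s)).dist s t =
      min (ddist G P f s t) (jdist G P f s t) :=
  dist_eq_min_ddist_jdist_general G hw s P hchain hnodup hhead hshort f hf1 hf2 t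
end

section
/- Let B be a finite rooted binary tree in which every node has either zero or exactly two children, and let c assign to each node a natural number such that c(v) ≥ 2 for every node v and c(v) + 1 = c(v_L) + c(v_R) for every internal node v with children v_L, v_R. Then for every antichain A of nodes of B (a set of nodes no one of which is an ancestor of another), the sum of c(v) over v ∈ A is at most 2·c(root) − 2. -/
/-!
Induct on the tree. If the root lies in the antichain `A`, then `A` is just the root and the
bound reads `c(root) ≤ 2 c(root) - 2`, i.e. `c(root) ≥ 2`. Otherwise `A` splits into antichains
of the two subtrees, and by induction its weight is at most
`(2 c(v_L) - 2) + (2 c(v_R) - 2) = 2 (c(root) + 1) - 4 = 2 c(root) - 2`.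
-/

/-- A finite rooted binary tree in which every node has either zero or exactly two
children. -/
inductive FullBTree where
  | leaf : FullBTree
  | node : FullBTree → FullBTree → FullBTree

namespace FullBTree

/-- The subtree of `t` rooted at the node addressed by the direction list `p`
(`false` = left child, `true` = right child); `none` if `p` is not a node of `t`. -/
def subtreeAt : FullBTree → List Bool → Option FullBTree
  | t, [] => some t
  | leaf, _ :: _ => none
  | node l _, false :: p => subtreeAt l p
  | node _ r, true :: p => subtreeAt r p

/-- `p` addresses a node of `t`. -/
def IsNode (t : FullBTree) (p : List Bool) : Prop := (subtreeAt t p).isSome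

end FullBTree

theorem Finset.sum_eq_sum_sum_preimage_cons {α M : Type*} [Fintype α] [AddCommMonoid M]
    (A : Finset (List α)) (hA : [] ∉ A) (f : List α → M) :
    ∑ p ∈ A, f p = ∑ a, ∑ q ∈ A.preimage (List.cons a) List.cons_injective.injOn, f (a :: q) := by
  rw [Finset.sum_sigma']
  symm
  refine Finset.sum_bij (fun x _ => x.1 :: x.2) (fun x hx => by simpa using hx)
    (fun x _ y _ hxy => ?_) (fun p hp => ?_) (fun _ _ => rfl)
  · obtain ⟨hfst, hsnd⟩ := List.cons_eq_cons.mp hxy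
    exact Sigma.ext hfst (heq_of_eq hsnd)
  · obtain _ | ⟨a, q⟩ := p
    · exact absurd hp hA
    · exact ⟨⟨a, q⟩, by simpa using hp, rfl⟩

theorem IsAntichain.preimage_cons {α : Type*} {A : Finset (List α)}
    (hA : IsAntichain (· <+: ·) (A : Set (List α))) (a : α) :
    IsAntichain (· <+: ·)
      (A.preimage (List.cons a) List.cons_injective.injOn : Set (List α)) := by
  rw [Finset.coe_preimage]
  exact hA.preimage List.cons_injective fun _ _ h => List.cons_prefix_cons.mpr ⟨rfl, h⟩

namespace FullBTree

variable {t l r : FullBTree} {p : List Bool}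

@[simp]
theorem subtreeAt_node_cons (b : Bool) :
    (node l r).subtreeAt (b :: p) = (bif b then r else l).subtreeAt p := by
  cases b <;> rfl

@[simp]
theorem isNode_nil : t.IsNode [] := by
  simp [IsNode, subtreeAt]

@[simp]
theorem isNode_node_cons {b : Bool} :
    (node l r).IsNode (b :: p) ↔ (bif b then r else l).IsNode p := by
  simp [IsNode]

theorem eq_nil_of_isNode_leaf (h : leaf.IsNode p) : p = [] := by
  cases p with
  | nil => rfl
  | cons b q => simp [IsNode, subtreeAt] at h

structure IsWeighting (t : FullBTree) (c : List Bool → ℕ) : Prop where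
  two_le : ∀ p, t.IsNode p → 2 ≤ c p
  add_one_eq : ∀ p l r, t.subtreeAt p = some (node l r) →
    c p + 1 = c (p ++ [false]) + c (p ++ [true])

theorem IsWeighting.child {c : List Bool → ℕ} (hc : (node l r).IsWeighting c) (b : Bool) :
    (bif b then r else l).IsWeighting (fun q => c (b :: q)) where
  two_le q hq := hc.two_le (b :: q) (isNode_node_cons.mpr hq)
  add_one_eq q l' r' h := hc.add_one_eq (b :: q) l' r' (by rwa [subtreeAt_node_cons])

theorem sum_le_of_subset_singleton_nil {c : List Bool → ℕ} {A : Finset (List Bool)}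
    (hc : 2 ≤ c []) (hA : A ⊆ {[]}) : ∑ p ∈ A, c p ≤ 2 * c [] - 2 :=
  calc ∑ p ∈ A, c p ≤ ∑ p ∈ {[]}, c p := Finset.sum_le_sum_of_subset hA
    _ = c [] := Finset.sum_singleton c []
    _ ≤ 2 * c [] - 2 := by omega

theorem IsWeighting.sum_le_of_isAntichain {c : List Bool → ℕ} (hc : t.IsWeighting c)
    {A : Finset (List Bool)} (hA : ∀ p ∈ A, t.IsNode p)
    (hanti : IsAntichain (· <+: ·) (A : Set (List Bool))) :
    ∑ p ∈ A, c p ≤ 2 * c [] - 2 := by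
  induction t generalizing c A with
  | leaf =>
    exact sum_le_of_subset_singleton_nil (hc.two_le [] isNode_nil) fun p hp =>
      Finset.mem_singleton.mpr (eq_nil_of_isNode_leaf (hA p hp))
  | node l r ihl ihr =>
    by_cases hnil : [] ∈ A
    · refine sum_le_of_subset_singleton_nil (hc.two_le [] isNode_nil) fun p hp =>
        Finset.mem_singleton.mpr ?_
      by_contra hp_ne
      exact hanti hnil hp (Ne.symm hp_ne) List.nil_prefix
    · have hchild (b : Bool) :
          ∑ q ∈ A.preimage (List.cons b) List.cons_injective.injOn, c (b :: q) ≤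
            2 * c [b] - 2 := by
        have hA' (q) (hq : q ∈ A.preimage (List.cons b) List.cons_injective.injOn) :
            (bif b then r else l).IsNode q :=
          isNode_node_cons.mp (hA _ (Finset.mem_preimage.mp hq))
        have hanti' := hanti.preimage_cons b
        cases b
        · exact ihl (hc.child false) hA' hanti'
        · exact ihr (hc.child true) hA' hanti'
      have hsplit := hc.add_one_eq [] l r rfl
      have hl := hchild false
      have hr := hchild true
      -- children have weight `≥ 1`, so the truncated subtractions in `hl`, `hr` are exact
      have hl2 := hc.two_le [false] (isNode_node_cons.mpr isNode_nil)
      have hr2 := hc.two_le [true] (isNode_node_cons.mpr isNode_nil)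
      simp only [List.nil_append] at hsplit
      rw [Finset.sum_eq_sum_sum_preimage_cons A hnil, Fintype.sum_bool]
      omega

end FullBTree

/-- **Antichain weight bound in a full binary tree.** Let `B` be a finite rooted binary
tree in which every node has zero or two children (nodes are addressed by direction
lists, the root by `[]`), and let `c` assign a natural number to each node such that
`c v ≥ 2` for every node `v` and `c v + 1 = c v_L + c v_R` for every internal node `v`
with children `v_L`, `v_R`.  Then for every antichain `A` of nodes of `B` (no node of
`A` is an ancestor of another, i.e. no address is a prefix of another),
`∑ v ∈ A, c v ≤ 2 · c(root) − 2`. -/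
theorem antichain_weight_bound (B : FullBTree) (c : List Bool → ℕ)
    (hc2 : ∀ p, B.IsNode p → 2 ≤ c p)
    (hcsum : ∀ p l r, B.subtreeAt p = some (FullBTree.node l r) →
      c p + 1 = c (p ++ [false]) + c (p ++ [true]))
    (A : Finset (List Bool))
    (hA : ∀ p ∈ A, B.IsNode p)
    (hanti : ∀ p ∈ A, ∀ q ∈ A, p <+: q → p = q) :
    ∑ p ∈ A, c p ≤ 2 * c [] - 2 :=
  FullBTree.IsWeighting.sum_le_of_isAntichain ⟨hc2, hcsum⟩ hA
    fun p hp q hq hpq hpre => hpq (hanti p hp q hq hpre)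
end
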